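/- Every formula φ of the cc-modal logic has a logically equivalent strong normal form whose modal depth is no larger than that of φ. -/
import Mathlib



/-- Process terms: `p ::= 0 | ω | a.p | p + p`. -/
inductive Proc (Act : Type) : Type where
  | nil : Proc Act
  | omega : Proc Act
  | act : Act → Proc Act → Proc Act
  | plus : Proc Act → Proc Act → Proc Act
deriving DecidableEq

/-- Operational semantics of process terms.  The parameter `isL : Act → Bool`
describes the partition `A = A^l ⊎ A^r`: `isL a = true` means `a ∈ A^l`
(contravariant), `isL a = false` means `a ∈ A^r` (covariant). -/
inductive Step {Act : Type} (isL : Act → Bool) : Proc Act → Act → Proc Act → Prop where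
  | omega {b : Act} : isL b = true → Step isL .omega b .omega
  | act {a : Act} {p : Proc Act} : Step isL (.act a p) a p
  | plusL {p q p' : Proc Act} {a : Act} : Step isL p a p' → Step isL (.plus p q) a p'
  | plusR {p q q' : Proc Act} {a : Act} : Step isL q a q' → Step isL (.plus p q) a q'

/-- A covariant-contravariant simulation over an LTS with state space `S`,
actions `Act` partitioned by `isL` (`true` = contravariant `A^l`,
`false` = covariant `A^r`) and transition relation `tr`. -/
def IsCCSim {S Act : Type} (isL : Act → Bool) (tr : S → Act → S → Prop)
    (R : S → S → Prop) : Prop :=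
  ∀ p q, R p q →
    ((∀ a, isL a = false → ∀ p', tr p a p' → ∃ q', tr q a q' ∧ R p' q') ∧
     (∀ b, isL b = true → ∀ q', tr q b q' → ∃ p', tr p b p' ∧ R p' q'))

/-- The covariant-contravariant simulation preorder `p ≲cc q` over an LTS. -/
def CCLE {S Act : Type} (isL : Act → Bool) (tr : S → Act → S → Prop) (p q : S) : Prop :=
  ∃ R, IsCCSim isL tr R ∧ R p q

/-- `p ≲cc q` for process terms. -/
def ccle {Act : Type} (isL : Act → Bool) (p q : Proc Act) : Prop :=
  CCLE isL (Step isL) p q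

/-- The covariant-contravariant modal logic `L`:
`φ ::= ⊥ | ⊤ | φ∧φ | φ∨φ | [b]φ | ⟨a⟩φ` with `a ∈ A^r` (`isL a = false`)
and `b ∈ A^l` (`isL b = true`). -/
inductive Formula (Act : Type) (isL : Act → Bool) : Type where
  | bot : Formula Act isL
  | top : Formula Act isL
  | and : Formula Act isL → Formula Act isL → Formula Act isL
  | or : Formula Act isL → Formula Act isL → Formula Act isL
  | box : {x : Act // isL x = true} → Formula Act isL → Formula Act isL
  | dia : {x : Act // isL x = false} → Formula Act isL → Formula Act isL

/-- The satisfaction relation `p ⊨ φ`. -/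
def Sat {Act : Type} (isL : Act → Bool) : Proc Act → Formula Act isL → Prop
  | _, .bot => False
  | _, .top => True
  | p, .and φ ψ => Sat isL p φ ∧ Sat isL p ψ
  | p, .or φ ψ => Sat isL p φ ∨ Sat isL p ψ
  | p, .box b φ => ∀ p', Step isL p b.1 p' → Sat isL p' φ
  | p, .dia a φ => ∃ p', Step isL p a.1 p' ∧ Sat isL p' φ

/-- `φ ≤ ψ`: every process term satisfying `φ` satisfies `ψ`. -/
def FormLe {Act : Type} (isL : Act → Bool) (φ ψ : Formula Act isL) : Prop :=
  ∀ p, Sat isL p φ → Sat isL p ψ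

/-- `φ ≡ ψ`: `φ` and `ψ` are satisfied by exactly the same process terms. -/
def FormEquiv {Act : Type} (isL : Act → Bool) (φ ψ : Formula Act isL) : Prop :=
  ∀ p, Sat isL p φ ↔ Sat isL p ψ

/-- `φ` is a characteristic formula for `p`: `p ⊨ φ` and every `q` satisfying
`φ` lies above `p` in the cc-simulation preorder. -/
def CharFor {Act : Type} (isL : Act → Bool) (φ : Formula Act isL) (p : Proc Act) : Prop :=
  Sat isL p φ ∧ ∀ q, Sat isL q φ → ccle isL p q

/-- The formula `φ` is represented by the (single) process term `p`. -/
def Represents {Act : Type} (isL : Act → Bool) (p : Proc Act) (φ : Formula Act isL) : Prop :=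
  ∀ q, Sat isL q φ ↔ ccle isL p q

/-- Finite conjunction of a list of formulae (the empty conjunction is `⊤`). -/
def listAnd {Act : Type} (isL : Act → Bool) : List (Formula Act isL) → Formula Act isL
  | [] => .top
  | φ :: l => .and φ (listAnd isL l)

/-- Finite disjunction of a list of formulae (the empty disjunction is `⊥`). -/
def listOr {Act : Type} (isL : Act → Bool) : List (Formula Act isL) → Formula Act isL
  | [] => .bot
  | φ :: l => .or φ (listOr isL l)

/-- Size of a process term (its length in symbols). -/
def psize {Act : Type} : Proc Act → Nat
  | .nil => 1
  | .omega => 1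
  | .act _ p => psize p + 1
  | .plus p q => psize p + psize q + 1

/-- The list of `a`-successors of a process term. -/
def succs {Act : Type} [DecidableEq Act] (isL : Act → Bool) : Proc Act → Act → List (Proc Act)
  | .nil, _ => []
  | .omega, b => if isL b then [.omega] else []
  | .act a p, c => if a = c then [p] else []
  | .plus p q, c => succs isL p c ++ succs isL q c

theorem psize_pos {Act : Type} (p : Proc Act) : 0 < psize p := by
  cases p <;> simp [psize]

theorem step_iff_mem_succs {Act : Type} [DecidableEq Act] (isL : Act → Bool)
    (p : Proc Act) (a : Act) (p' : Proc Act) :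
    Step isL p a p' ↔ p' ∈ succs isL p a := by
  constructor
  · intro h
    induction h with
    | omega hb => simp [succs, hb]
    | act => simp [succs]
    | plusL _ ih => simp [succs]; exact Or.inl ih
    | plusR _ ih => simp [succs]; exact Or.inr ih
  · intro h
    induction p generalizing p' with
    | nil => simp [succs] at h
    | omega =>
        by_cases hb : isL a = true <;> simp [succs, hb] at h
        subst h; exact Step.omega hb
    | act b q =>
        by_cases hb : b = a <;> simp [succs, hb] at h
        subst h; subst hb; exact Step.act
    | plus q r ihq ihr =>
        simp [succs] at h
        rcases h with h | h
        · exact Step.plusL (ihq _ h)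
        · exact Step.plusR (ihr _ h)

theorem mem_succs_psize {Act : Type} [DecidableEq Act] {isL : Act → Bool}
    {p p' : Proc Act} {a : Act} (h : p' ∈ succs isL p a) :
    p = Proc.omega ∨ psize p' < psize p := by
  induction p generalizing p' with
  | nil => simp [succs] at h
  | omega => exact Or.inl rfl
  | act b q =>
      right
      by_cases hb : b = a <;> simp [succs, hb] at h
      subst h; simp [psize]
  | plus q r ihq ihr =>
      right
      simp [succs] at h
      rcases h with h | h
      · rcases ihq h with rfl | hlt
        · have hq : p' = Proc.omega := by
            by_cases hb : isL a = true <;> simp [succs, hb] at h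
            exact h
          subst hq
          have := psize_pos r
          simp only [psize]; omega
        · have := psize_pos r
          simp only [psize]; omega
      · rcases ihr h with rfl | hlt
        · have hq : p' = Proc.omega := by
            by_cases hb : isL a = true <;> simp [succs, hb] at h
            exact h
          subst hq
          have := psize_pos q
          simp only [psize]; omega
        · have := psize_pos q
          simp only [psize]; omega

/-- The characteristic formula `χ(p)`, defined recursively by `χ(ω) = ⊤` and,
for `p ≠ ω`,
`χ(p) = ⋀_{p →a p', a ∈ A^r} ⟨a⟩χ(p') ∧ ⋀_{b ∈ A^l} [b] (⋁_{p →b p'} χ(p'))`. -/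
noncomputable def chi {Act : Type} [Fintype Act] [DecidableEq Act] (isL : Act → Bool)
    (p : Proc Act) : Formula Act isL :=
  if h : p = Proc.omega then Formula.top
  else
    Formula.and
      (listAnd isL ((Finset.univ : Finset {x : Act // isL x = false}).toList.map (fun a =>
        listAnd isL ((succs isL p a.1).attach.map (fun p' =>
          Formula.dia a (chi isL p'.1))))))
      (listAnd isL ((Finset.univ : Finset {x : Act // isL x = true}).toList.map (fun b =>
        Formula.box b (listOr isL ((succs isL p b.1).attach.map (fun p' =>
          chi isL p'.1))))))
termination_by psize p
decreasing_by
  · rcases mem_succs_psize p'.2 with h' | h'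
    · exact absurd h' h
    · exact h'
  · rcases mem_succs_psize p'.2 with h' | h'
    · exact absurd h' h
    · exact h'

/-- Sum of a list of process terms (the empty sum is `0`). -/
def plusList {Act : Type} : List (Proc Act) → Proc Act
  | [] => Proc.nil
  | p :: l => Proc.plus p (plusList l)

/-- Syntax trees for formulae in unary strong normal form.  `top` is `⊤`;
`node dias boxes` stands for
`⋀_{(a,φ) ∈ dias} ⟨a⟩φ  ∧  ⋀_{b ∈ A^l} [b] (⋁_{ψ ∈ K_b} ψ)`,
where `K_b` is the finite collection of all unary strong normal forms
associated to `b` in the association list `boxes`. -/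
inductive USNF (Act : Type) (isL : Act → Bool) : Type where
  | top : USNF Act isL
  | node : List ({x : Act // isL x = false} × USNF Act isL) →
      List ({x : Act // isL x = true} × List (USNF Act isL)) → USNF Act isL

/-- The entries associated to `b` in the association list `boxes`
(the family `K_b`). -/
def collect {Act : Type} [DecidableEq Act] {isL : Act → Bool}
    (boxes : List ({x : Act // isL x = true} × List (USNF Act isL)))
    (b : {x : Act // isL x = true}) : List (USNF Act isL) :=
  (boxes.filter (fun e => e.1 = b)).flatMap (fun e => e.2)

theorem mem_collect_sizeOf {Act : Type} [DecidableEq Act] {isL : Act → Bool}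
    {boxes : List ({x : Act // isL x = true} × List (USNF Act isL))}
    {b : {x : Act // isL x = true}} {u : USNF Act isL} (h : u ∈ collect boxes b) :
    sizeOf u < sizeOf boxes := by
  unfold collect at h
  rw [List.mem_flatMap] at h
  obtain ⟨e, he, hu⟩ := h
  rw [List.mem_filter] at he
  have h1 : sizeOf u < sizeOf e.2 := List.sizeOf_lt_of_mem hu
  have h2 : sizeOf e ≤ sizeOf boxes := le_of_lt (List.sizeOf_lt_of_mem he.1)
  have h3 : sizeOf e.2 < sizeOf e := by
    obtain ⟨e1, e2⟩ := e; simp only [Prod.mk.sizeOf_spec]; omega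
  omega

/-- The formula denoted by a unary strong normal form:
`⊤` for `top`, and
`⋀_{j ∈ J} ⟨a_j⟩ φ_j  ∧  ⋀_{b ∈ A^l} [b] ⋁_{k ∈ K_b} ψ^k_b`
for `node`. -/
noncomputable def USNF.toFormula {Act : Type} [Fintype Act] [DecidableEq Act]
    {isL : Act → Bool} : USNF Act isL → Formula Act isL
  | .top => Formula.top
  | .node dias boxes =>
      Formula.and
        (listAnd isL (dias.attach.map (fun d =>
          Formula.dia d.1.1 (USNF.toFormula d.1.2))))
        (listAnd isL ((Finset.univ : Finset {x : Act // isL x = true}).toList.map (fun b =>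
          Formula.box b (listOr isL ((collect boxes b).attach.map (fun u =>
            USNF.toFormula u.1))))))
decreasing_by
  · have h1 : sizeOf d.1 < sizeOf dias := List.sizeOf_lt_of_mem d.2
    have h2 : sizeOf d.1.2 < sizeOf d.1 := by
      obtain ⟨⟨d1, d2⟩, hd⟩ := d; simp only [Prod.mk.sizeOf_spec]; omega
    simp only [USNF.node.sizeOf_spec]
    omega
  · have h1 : sizeOf u.1 < sizeOf boxes := mem_collect_sizeOf u.2
    simp only [USNF.node.sizeOf_spec]
    omega

/-- The process term `θ(φ)` associated to a unary strong normal form: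
`θ(⊤) = ω` and `θ(φ) = Σ_{j∈J} a_j.θ(φ_j) + Σ_{b∈A^l} Σ_{k∈K_b} b.θ(ψ^k_b)`
(the empty sum is `0`). -/
noncomputable def USNF.theta {Act : Type} [Fintype Act] [DecidableEq Act]
    {isL : Act → Bool} : USNF Act isL → Proc Act
  | .top => Proc.omega
  | .node dias boxes =>
      Proc.plus
        (plusList (dias.attach.map (fun d => Proc.act d.1.1.1 (USNF.theta d.1.2))))
        (plusList ((Finset.univ : Finset {x : Act // isL x = true}).toList.map (fun b =>
          plusList ((collect boxes b).attach.map (fun u =>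
            Proc.act b.1 (USNF.theta u.1))))))
decreasing_by
  · have h1 : sizeOf d.1 < sizeOf dias := List.sizeOf_lt_of_mem d.2
    have h2 : sizeOf d.1.2 < sizeOf d.1 := by
      obtain ⟨⟨d1, d2⟩, hd⟩ := d; simp only [Prod.mk.sizeOf_spec]; omega
    simp only [USNF.node.sizeOf_spec]
    omega
  · have h1 : sizeOf u.1 < sizeOf boxes := mem_collect_sizeOf u.2
    simp only [USNF.node.sizeOf_spec]
    omega

/-- The modal depth of a formula: the maximum nesting of the modal operators
`[b]` and `⟨a⟩`. -/
def mdepth {Act : Type} {isL : Act → Bool} : Formula Act isL → Nat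
  | .bot => 0
  | .top => 0
  | .and φ ψ => max (mdepth φ) (mdepth ψ)
  | .or φ ψ => max (mdepth φ) (mdepth ψ)
  | .box _ φ => mdepth φ + 1
  | .dia _ φ => mdepth φ + 1

section Aux

variable {Act : Type} [Fintype Act] [DecidableEq Act] {isL : Act → Bool}

theorem sat_listAnd {p : Proc Act} {l : List (Formula Act isL)} :
    Sat isL p (listAnd isL l) ↔ ∀ φ ∈ l, Sat isL p φ := by
  induction l with
  | nil => simp [listAnd, Sat]
  | cons φ l ih => simp [listAnd, Sat, ih]

theorem sat_listOr {p : Proc Act} {l : List (Formula Act isL)} :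
    Sat isL p (listOr isL l) ↔ ∃ φ ∈ l, Sat isL p φ := by
  induction l with
  | nil => simp [listOr, Sat]
  | cons φ l ih => simp [listOr, Sat, ih]

theorem mdepth_listAnd_le {l : List (Formula Act isL)} {n : Nat}
    (h : ∀ φ ∈ l, mdepth φ ≤ n) : mdepth (listAnd isL l) ≤ n := by
  induction l with
  | nil => simp [listAnd, mdepth]
  | cons φ l ih => simp_all [listAnd, mdepth]

theorem mdepth_listOr_le {l : List (Formula Act isL)} {n : Nat}
    (h : ∀ φ ∈ l, mdepth φ ≤ n) : mdepth (listOr isL l) ≤ n := by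
  induction l with
  | nil => simp [listOr, mdepth]
  | cons φ l ih => simp_all [listOr, mdepth]

theorem le_mdepth_listAnd {l : List (Formula Act isL)} {φ : Formula Act isL}
    (h : φ ∈ l) : mdepth φ ≤ mdepth (listAnd isL l) := by
  induction l with
  | nil => simp at h
  | cons ψ l ih =>
      rcases List.mem_cons.1 h with rfl | h
      · simp [listAnd, mdepth]
      · simp only [listAnd, mdepth]
        exact le_max_of_le_right (ih h)

theorem le_mdepth_listOr {l : List (Formula Act isL)} {φ : Formula Act isL}
    (h : φ ∈ l) : mdepth φ ≤ mdepth (listOr isL l) := by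
  induction l with
  | nil => simp at h
  | cons ψ l ih =>
      rcases List.mem_cons.1 h with rfl | h
      · simp [listOr, mdepth]
      · simp only [listOr, mdepth]
        exact le_max_of_le_right (ih h)

theorem toFormula_top : (USNF.top : USNF Act isL).toFormula = Formula.top := by
  rw [USNF.toFormula]

theorem toFormula_node (dias : List ({x : Act // isL x = false} × USNF Act isL))
    (boxes : List ({x : Act // isL x = true} × List (USNF Act isL))) :
    (USNF.node dias boxes).toFormula =
      Formula.and
        (listAnd isL (dias.attach.map (fun d =>
          Formula.dia d.1.1 (USNF.toFormula d.1.2))))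
        (listAnd isL ((Finset.univ : Finset {x : Act // isL x = true}).toList.map (fun b =>
          Formula.box b (listOr isL ((collect boxes b).attach.map (fun u =>
            USNF.toFormula u.1)))))) := by
  rw [USNF.toFormula]

theorem sat_node_iff {p : Proc Act}
    {dias : List ({x : Act // isL x = false} × USNF Act isL)}
    {boxes : List ({x : Act // isL x = true} × List (USNF Act isL))} :
    Sat isL p ((USNF.node dias boxes).toFormula) ↔
      ((∀ d ∈ dias, ∃ p', Step isL p d.1.1 p' ∧ Sat isL p' d.2.toFormula) ∧
       (∀ b : {x : Act // isL x = true}, ∀ p', Step isL p b.1 p' →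
          ∃ u ∈ collect boxes b, Sat isL p' u.toFormula)) := by
  rw [toFormula_node]
  simp only [Sat, sat_listAnd, sat_listOr, List.mem_map, List.mem_attach, true_and,
    Finset.mem_toList, Finset.mem_univ, Subtype.exists, Prod.exists,
    forall_exists_index, Subtype.forall, Prod.forall]
  constructor
  · rintro ⟨h1, h2⟩
    refine ⟨fun a ha u hu => ?_, fun a ha p' hs => ?_⟩
    · have := h1 _ a ha u hu rfl
      simpa [Sat] using this
    · have h3 := h2 _ a ha rfl
      simp only [Sat] at h3
      have h4 := h3 p' hs
      obtain ⟨φ, hm, hφ⟩ := sat_listOr.1 h4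
      simp only [List.mem_map, List.mem_attach, true_and, Subtype.exists] at hm
      obtain ⟨u, hu, rfl⟩ := hm
      exact ⟨u, hu, hφ⟩
  · rintro ⟨h1, h2⟩
    refine ⟨fun φ a ha u hu he => ?_, fun φ a ha he => ?_⟩
    · subst he
      simpa [Sat] using h1 a ha u hu
    · subst he
      simp only [Sat]
      intro p' hs
      obtain ⟨u, hu, hsat⟩ := h2 a ha p' hs
      refine sat_listOr.2 ⟨u.toFormula, ?_, hsat⟩
      simp only [List.mem_map, List.mem_attach, true_and, Subtype.exists]
      exact ⟨u, hu, rfl⟩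


/-- Conjunction of two unary strong normal forms, again as a unary strong
normal form. -/
noncomputable def uand : USNF Act isL → USNF Act isL → USNF Act isL
  | .top, v => v
  | .node d1 b1, .top => .node d1 b1
  | .node d1 b1, .node d2 b2 =>
      .node (d1 ++ d2)
        ((Finset.univ : Finset {x : Act // isL x = true}).toList.map (fun b =>
          (b, (collect b1 b).attach.flatMap (fun ψ =>
                (collect b2 b).map (fun ψ' => uand ψ.1 ψ')))))
termination_by u _ => sizeOf u
decreasing_by
  have h1 := mem_collect_sizeOf ψ.2
  simp only [USNF.node.sizeOf_spec]
  omega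

theorem collect_cons {a : {x : Act // isL x = true}} {L : List (USNF Act isL)}
    {t : List ({x : Act // isL x = true} × List (USNF Act isL))}
    {b : {x : Act // isL x = true}} :
    collect ((a, L) :: t) b = (if a = b then L else []) ++ collect t b := by
  simp only [collect, List.filter_cons]
  by_cases h : a = b
  · subst h; simp
  · simp [h]

theorem collect_map_nil {l : List {x : Act // isL x = true}}
    {f : {x : Act // isL x = true} → List (USNF Act isL)}
    {b : {x : Act // isL x = true}} (hb : b ∉ l) :
    collect (l.map (fun b' => (b', f b'))) b = [] := by
  induction l with
  | nil => simp [collect]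
  | cons a l ih =>
      simp only [List.mem_cons, not_or] at hb
      rw [List.map_cons, collect_cons, if_neg (fun h => hb.1 h.symm), ih hb.2, List.nil_append]

theorem collect_map {l : List {x : Act // isL x = true}} (hl : l.Nodup)
    (f : {x : Act // isL x = true} → List (USNF Act isL))
    {b : {x : Act // isL x = true}} (hb : b ∈ l) :
    collect (l.map (fun b' => (b', f b'))) b = f b := by
  induction l with
  | nil => simp at hb
  | cons a l ih =>
      obtain ⟨ha, hl'⟩ := List.nodup_cons.1 hl
      rw [List.map_cons, collect_cons]
      rcases List.mem_cons.1 hb with rfl | hb'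
      · rw [if_pos rfl, collect_map_nil ha, List.append_nil]
      · have hab : a ≠ b := by rintro rfl; exact ha hb'
        rw [if_neg hab, List.nil_append]
        exact ih hl' hb'

theorem collect_map_univ (f : {x : Act // isL x = true} → List (USNF Act isL))
    (b : {x : Act // isL x = true}) :
    collect (((Finset.univ : Finset {x : Act // isL x = true}).toList).map
      (fun b' => (b', f b'))) b = f b :=
  collect_map (Finset.nodup_toList _) f (by simp)

theorem mdepth_node_le {dias : List ({x : Act // isL x = false} × USNF Act isL)}
    {boxes : List ({x : Act // isL x = true} × List (USNF Act isL))} {m : Nat}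
    (h1 : ∀ d ∈ dias, mdepth (USNF.toFormula d.2) + 1 ≤ m)
    (h2 : ∀ b : {x : Act // isL x = true}, ∀ u ∈ collect boxes b,
      mdepth u.toFormula + 1 ≤ m)
    (h3 : ∀ _ : {x : Act // isL x = true}, 1 ≤ m) :
    mdepth ((USNF.node dias boxes).toFormula) ≤ m := by
  rw [toFormula_node]
  refine max_le (mdepth_listAnd_le ?_) (mdepth_listAnd_le ?_)
  · intro φ hφ
    obtain ⟨d, -, rfl⟩ := List.mem_map.1 hφ
    have := h1 d.1 d.2
    simp only [mdepth]
    omega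
  · intro φ hφ
    obtain ⟨b, -, rfl⟩ := List.mem_map.1 hφ
    have hb1 := h3 b
    have : mdepth (listOr isL ((collect boxes b).attach.map (fun u =>
        USNF.toFormula u.1))) ≤ m - 1 := by
      apply mdepth_listOr_le
      intro ψ hψ
      obtain ⟨u, -, rfl⟩ := List.mem_map.1 hψ
      have := h2 b u.1 u.2
      omega
    simp only [mdepth]
    omega

theorem le_mdepth_node_dia {dias : List ({x : Act // isL x = false} × USNF Act isL)}
    {boxes : List ({x : Act // isL x = true} × List (USNF Act isL))}
    {d : {x : Act // isL x = false} × USNF Act isL} (hd : d ∈ dias) :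
    mdepth d.2.toFormula + 1 ≤ mdepth ((USNF.node dias boxes).toFormula) := by
  rw [toFormula_node]
  have hm : (Formula.dia d.1 d.2.toFormula) ∈ dias.attach.map (fun d =>
      Formula.dia d.1.1 (USNF.toFormula d.1.2)) :=
    List.mem_map.2 ⟨⟨d, hd⟩, List.mem_attach _ _, rfl⟩
  have h := le_mdepth_listAnd (isL := isL) hm
  simp only [mdepth] at h ⊢
  omega

theorem le_mdepth_node_box {dias : List ({x : Act // isL x = false} × USNF Act isL)}
    {boxes : List ({x : Act // isL x = true} × List (USNF Act isL))}
    {b : {x : Act // isL x = true}} {u : USNF Act isL} (hu : u ∈ collect boxes b) :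
    mdepth u.toFormula + 1 ≤ mdepth ((USNF.node dias boxes).toFormula) := by
  rw [toFormula_node]
  have hm : (Formula.box b (listOr isL ((collect boxes b).attach.map (fun u =>
      USNF.toFormula u.1)))) ∈ (Finset.univ :
        Finset {x : Act // isL x = true}).toList.map (fun b =>
          Formula.box b (listOr isL ((collect boxes b).attach.map (fun u =>
            USNF.toFormula u.1)))) :=
    List.mem_map.2 ⟨b, by simp, rfl⟩
  have h := le_mdepth_listAnd (isL := isL) hm
  have h2 : mdepth u.toFormula ≤ mdepth (listOr isL ((collect boxes b).attach.map
      (fun u => USNF.toFormula u.1))) :=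
    le_mdepth_listOr (List.mem_map.2 ⟨⟨u, hu⟩, List.mem_attach _ _, rfl⟩)
  simp only [mdepth] at h ⊢
  omega

theorem one_le_mdepth_node {dias : List ({x : Act // isL x = false} × USNF Act isL)}
    {boxes : List ({x : Act // isL x = true} × List (USNF Act isL))}
    (b : {x : Act // isL x = true}) :
    1 ≤ mdepth ((USNF.node dias boxes).toFormula) := by
  rw [toFormula_node]
  have hm : (Formula.box b (listOr isL ((collect boxes b).attach.map (fun u =>
      USNF.toFormula u.1)))) ∈ (Finset.univ :
        Finset {x : Act // isL x = true}).toList.map (fun b =>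
          Formula.box b (listOr isL ((collect boxes b).attach.map (fun u =>
            USNF.toFormula u.1)))) :=
    List.mem_map.2 ⟨b, by simp, rfl⟩
  have h := le_mdepth_listAnd (isL := isL) hm
  simp only [mdepth] at h ⊢
  omega


theorem uand_node_node (d1 d2 : List ({x : Act // isL x = false} × USNF Act isL))
    (b1 b2 : List ({x : Act // isL x = true} × List (USNF Act isL))) :
    uand (USNF.node d1 b1) (USNF.node d2 b2) =
      USNF.node (d1 ++ d2)
        ((Finset.univ : Finset {x : Act // isL x = true}).toList.map (fun b =>
          (b, (collect b1 b).attach.flatMap (fun ψ =>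
                (collect b2 b).map (fun ψ' => uand ψ.1 ψ'))))) := by
  exact uand.eq_3 d1 b1 d2 b2

theorem sat_uand_aux (n : Nat) : ∀ (u v : USNF Act isL), sizeOf u < n →
    ∀ p, Sat isL p ((uand u v).toFormula) ↔
      (Sat isL p u.toFormula ∧ Sat isL p v.toFormula) := by
  induction n with
  | zero => intro u v hu; omega
  | succ n ih =>
    intro u v hu p
    match u, v with
    | .top, v => first | (rw [uand.eq_1]; simp [toFormula_top, Sat]) | (rw [uand.eq_2]; simp [toFormula_top, Sat])
    | .node d1 b1, .top => first | (rw [uand.eq_1]; simp [toFormula_top, Sat]) | (rw [uand.eq_2]; simp [toFormula_top, Sat])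
    | .node d1 b1, .node d2 b2 =>
      simp only [USNF.node.sizeOf_spec] at hu
      have key : ∀ (b : {x : Act // isL x = true}) (p' : Proc Act),
          (∃ w ∈ collect ((Finset.univ : Finset {x : Act // isL x = true}).toList.map
              (fun b => (b, (collect b1 b).attach.flatMap (fun ψ =>
                (collect b2 b).map (fun ψ' => uand ψ.1 ψ'))))) b,
            Sat isL p' w.toFormula) ↔
          ((∃ ψ ∈ collect b1 b, Sat isL p' ψ.toFormula) ∧
           (∃ ψ' ∈ collect b2 b, Sat isL p' ψ'.toFormula)) := by
        intro b p'
        rw [collect_map_univ]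
        constructor
        · rintro ⟨w, hw, hsat⟩
          rw [List.mem_flatMap] at hw
          obtain ⟨ψ, hψ, hw⟩ := hw
          rw [List.mem_map] at hw
          obtain ⟨ψ', hψ', rfl⟩ := hw
          have hsz : sizeOf ψ.1 < n := by
            have := mem_collect_sizeOf ψ.2
            omega
          have := (ih ψ.1 ψ' hsz p').1 hsat
          exact ⟨⟨ψ.1, ψ.2, this.1⟩, ⟨ψ', hψ', this.2⟩⟩
        · rintro ⟨⟨ψ, hψ, h1⟩, ⟨ψ', hψ', h2⟩⟩
          have hsz : sizeOf ψ < n := by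
            have := mem_collect_sizeOf hψ
            omega
          refine ⟨uand ψ ψ', ?_, (ih ψ ψ' hsz p').2 ⟨h1, h2⟩⟩
          rw [List.mem_flatMap]
          exact ⟨⟨ψ, hψ⟩, List.mem_attach _ _, List.mem_map.2 ⟨ψ', hψ', rfl⟩⟩
      rw [uand_node_node, sat_node_iff, sat_node_iff, sat_node_iff]
      constructor
      · rintro ⟨hd, hb⟩
        exact ⟨⟨fun d hd1 => hd d (List.mem_append_left _ hd1),
                fun b p' hs => ((key b p').1 (hb b p' hs)).1⟩,
               ⟨fun d hd2 => hd d (List.mem_append_right _ hd2),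
                fun b p' hs => ((key b p').1 (hb b p' hs)).2⟩⟩
      · rintro ⟨⟨hd1, hb1⟩, ⟨hd2, hb2⟩⟩
        refine ⟨fun d hd => ?_, fun b p' hs => (key b p').2 ⟨hb1 b p' hs, hb2 b p' hs⟩⟩
        rcases List.mem_append.1 hd with h | h
        · exact hd1 d h
        · exact hd2 d h

theorem sat_uand {u v : USNF Act isL} {p : Proc Act} :
    Sat isL p ((uand u v).toFormula) ↔
      (Sat isL p u.toFormula ∧ Sat isL p v.toFormula) :=
  sat_uand_aux (sizeOf u + 1) u v (by omega) p

theorem mdepth_uand_aux (n : Nat) : ∀ (u v : USNF Act isL), sizeOf u < n →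
    mdepth ((uand u v).toFormula) ≤
      max (mdepth u.toFormula) (mdepth v.toFormula) := by
  induction n with
  | zero => intro u v hu; omega
  | succ n ih =>
    intro u v hu
    match u, v with
    | .top, v => first | (rw [uand.eq_1]; simp [toFormula_top, mdepth]) | (rw [uand.eq_2]; simp [toFormula_top, mdepth])
    | .node d1 b1, .top => first | (rw [uand.eq_1]; simp [toFormula_top, mdepth]) | (rw [uand.eq_2]; simp [toFormula_top, mdepth])
    | .node d1 b1, .node d2 b2 =>
      simp only [USNF.node.sizeOf_spec] at hu
      rw [uand_node_node]
      apply mdepth_node_le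
      · intro d hd
        rcases List.mem_append.1 hd with h | h
        · exact le_max_of_le_left (le_mdepth_node_dia h)
        · exact le_max_of_le_right (le_mdepth_node_dia h)
      · intro b w hw
        rw [collect_map_univ] at hw
        rw [List.mem_flatMap] at hw
        obtain ⟨ψ, hψ, hw⟩ := hw
        rw [List.mem_map] at hw
        obtain ⟨ψ', hψ', rfl⟩ := hw
        have hsz : sizeOf ψ.1 < n := by
          have := mem_collect_sizeOf ψ.2
          omega
        have h1 := ih ψ.1 ψ' hsz
        have h2 : mdepth ψ.1.toFormula + 1 ≤ mdepth ((USNF.node d1 b1).toFormula) :=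
          le_mdepth_node_box ψ.2
        have h3 : mdepth ψ'.toFormula + 1 ≤ mdepth ((USNF.node d2 b2).toFormula) :=
          le_mdepth_node_box hψ'
        omega
      · intro b
        exact le_max_of_le_left (one_le_mdepth_node b)

theorem mdepth_uand {u v : USNF Act isL} :
    mdepth ((uand u v).toFormula) ≤
      max (mdepth u.toFormula) (mdepth v.toFormula) :=
  mdepth_uand_aux (sizeOf u + 1) u v (by omega)


theorem sat_snf {l : List (USNF Act isL)} {p : Proc Act} :
    Sat isL p (listOr isL (l.map USNF.toFormula)) ↔
      ∃ u ∈ l, Sat isL p u.toFormula := by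
  rw [sat_listOr]
  constructor
  · rintro ⟨φ, hm, h⟩
    obtain ⟨u, hu, rfl⟩ := List.mem_map.1 hm
    exact ⟨u, hu, h⟩
  · rintro ⟨u, hu, h⟩
    exact ⟨_, List.mem_map.2 ⟨u, hu, rfl⟩, h⟩

end Aux

/-- Every formula `φ` of the cc-modal logic has a logically equivalent strong
normal form (a finite, possibly empty, disjunction of unary strong normal
forms) whose modal depth is no larger than that of `φ`. -/
theorem exists_equiv_snf {Act : Type} [Fintype Act] [DecidableEq Act]
    (isL : Act → Bool) (φ : Formula Act isL) :
    ∃ l : List (USNF Act isL),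
      FormEquiv isL φ (listOr isL (l.map USNF.toFormula)) ∧
      mdepth (listOr isL (l.map USNF.toFormula)) ≤ mdepth φ := by
  induction φ with
  | bot =>
      exact ⟨[], fun p => Iff.rfl, le_refl _⟩
  | top =>
      refine ⟨[USNF.top], fun p => ?_, ?_⟩
      · simp [listOr, Sat, toFormula_top]
      · simp [listOr, mdepth, toFormula_top]
  | and φ ψ ihφ ihψ =>
      obtain ⟨l1, he1, hd1⟩ := ihφ
      obtain ⟨l2, he2, hd2⟩ := ihψ
      refine ⟨l1.flatMap (fun u => l2.map (fun v => uand u v)), fun p => ?_, ?_⟩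
      · simp only [Sat]
        rw [he1 p, he2 p, sat_snf, sat_snf, sat_snf]
        constructor
        · rintro ⟨⟨u, hu, h1⟩, ⟨v, hv, h2⟩⟩
          exact ⟨uand u v, List.mem_flatMap.2 ⟨u, hu, List.mem_map.2 ⟨v, hv, rfl⟩⟩,
            sat_uand.2 ⟨h1, h2⟩⟩
        · rintro ⟨w, hw, h⟩
          obtain ⟨u, hu, hw⟩ := List.mem_flatMap.1 hw
          obtain ⟨v, hv, rfl⟩ := List.mem_map.1 hw
          obtain ⟨h1, h2⟩ := sat_uand.1 h
          exact ⟨⟨u, hu, h1⟩, ⟨v, hv, h2⟩⟩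
      · apply mdepth_listOr_le
        intro χ hχ
        obtain ⟨w, hw, rfl⟩ := List.mem_map.1 hχ
        obtain ⟨u, hu, hw⟩ := List.mem_flatMap.1 hw
        obtain ⟨v, hv, rfl⟩ := List.mem_map.1 hw
        have h0 := mdepth_uand (u := u) (v := v)
        have hu' := le_mdepth_listOr (isL := isL) ((List.mem_map (f := USNF.toFormula)).2 ⟨u, hu, rfl⟩)
        have hv' := le_mdepth_listOr (isL := isL) ((List.mem_map (f := USNF.toFormula)).2 ⟨v, hv, rfl⟩)
        simp only [mdepth]
        omega
  | or φ ψ ihφ ihψ =>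
      obtain ⟨l1, he1, hd1⟩ := ihφ
      obtain ⟨l2, he2, hd2⟩ := ihψ
      refine ⟨l1 ++ l2, fun p => ?_, ?_⟩
      · simp only [Sat]
        rw [he1 p, he2 p, sat_snf, sat_snf, sat_snf]
        constructor
        · rintro (⟨u, hu, h⟩ | ⟨u, hu, h⟩)
          · exact ⟨u, List.mem_append_left _ hu, h⟩
          · exact ⟨u, List.mem_append_right _ hu, h⟩
        · rintro ⟨u, hu, h⟩
          rcases List.mem_append.1 hu with h' | h'
          · exact Or.inl ⟨u, h', h⟩
          · exact Or.inr ⟨u, h', h⟩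
      · apply mdepth_listOr_le
        intro χ hχ
        obtain ⟨w, hw, rfl⟩ := List.mem_map.1 hχ
        simp only [mdepth]
        rcases List.mem_append.1 hw with h' | h'
        · have := le_mdepth_listOr (isL := isL) ((List.mem_map (f := USNF.toFormula)).2 ⟨w, h', rfl⟩)
          omega
        · have := le_mdepth_listOr (isL := isL) ((List.mem_map (f := USNF.toFormula)).2 ⟨w, h', rfl⟩)
          omega
  | box b φ ih =>
      obtain ⟨l1, he1, hd1⟩ := ih
      refine ⟨[USNF.node [] ((Finset.univ : Finset {x : Act // isL x = true}).toList.map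
        (fun b' => (b', if b' = b then l1 else [USNF.top])))], fun p => ?_, ?_⟩
      · rw [sat_snf]
        simp only [Sat]
        constructor
        · intro h
          refine ⟨_, List.mem_singleton.2 rfl, ?_⟩
          rw [sat_node_iff]
          refine ⟨by simp, fun b' p' hs => ?_⟩
          rw [collect_map_univ]
          by_cases hb : b' = b
          · subst hb
            rw [if_pos rfl]
            exact sat_snf.1 ((he1 p').1 (h p' hs))
          · rw [if_neg hb]
            refine ⟨USNF.top, List.mem_singleton.2 rfl, ?_⟩
            rw [toFormula_top]
            trivial
        · rintro ⟨w, hw, hsat⟩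
          rw [List.mem_singleton] at hw
          subst hw
          rw [sat_node_iff] at hsat
          intro p' hs
          have h2 := hsat.2 b p' hs
          rw [collect_map_univ, if_pos rfl] at h2
          exact (he1 p').2 (sat_snf.2 h2)
      · apply mdepth_listOr_le
        intro χ hχ
        obtain ⟨w, hw, rfl⟩ := List.mem_map.1 hχ
        rw [List.mem_singleton] at hw
        subst hw
        simp only [mdepth]
        apply mdepth_node_le
        · simp
        · intro b' u hu
          rw [collect_map_univ] at hu
          by_cases hb : b' = b
          · subst hb
            rw [if_pos rfl] at hu
            have := le_mdepth_listOr (isL := isL) ((List.mem_map (f := USNF.toFormula)).2 ⟨u, hu, rfl⟩)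
            omega
          · rw [if_neg hb, List.mem_singleton] at hu
            subst hu
            rw [toFormula_top]
            simp [mdepth]
        · intro _
          omega
  | dia a φ ih =>
      obtain ⟨l1, he1, hd1⟩ := ih
      refine ⟨l1.map (fun u => USNF.node [(a, u)]
        ((Finset.univ : Finset {x : Act // isL x = true}).toList.map
          (fun b' => (b', [USNF.top])))), fun p => ?_, ?_⟩
      · rw [sat_snf]
        simp only [Sat]
        constructor
        · rintro ⟨p', hs, hφ⟩
          obtain ⟨u, hu, hsu⟩ := sat_snf.1 ((he1 p').1 hφ)
          refine ⟨_, List.mem_map.2 ⟨u, hu, rfl⟩, ?_⟩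
          rw [sat_node_iff]
          refine ⟨?_, fun b' p'' hs' => ?_⟩
          · intro d hd
            rw [List.mem_singleton] at hd
            subst hd
            exact ⟨p', hs, hsu⟩
          · rw [collect_map_univ]
            refine ⟨USNF.top, List.mem_singleton.2 rfl, ?_⟩
            rw [toFormula_top]
            trivial
        · rintro ⟨w, hw, hsat⟩
          obtain ⟨u, hu, rfl⟩ := List.mem_map.1 hw
          rw [sat_node_iff] at hsat
          obtain ⟨p', hs, hsu⟩ := hsat.1 (a, u) (List.mem_singleton.2 rfl)
          exact ⟨p', hs, (he1 p').2 (sat_snf.2 ⟨u, hu, hsu⟩)⟩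
      · apply mdepth_listOr_le
        intro χ hχ
        obtain ⟨w, hw, rfl⟩ := List.mem_map.1 hχ
        obtain ⟨u, hu, rfl⟩ := List.mem_map.1 hw
        simp only [mdepth]
        apply mdepth_node_le
        · intro d hd
          rw [List.mem_singleton] at hd
          subst hd
          have := le_mdepth_listOr (isL := isL) ((List.mem_map (f := USNF.toFormula)).2 ⟨u, hu, rfl⟩)
          show mdepth u.toFormula + 1 ≤ mdepth φ + 1
          omega
        · intro b' w hw'
          rw [collect_map_univ, List.mem_singleton] at hw'
          subst hw'
          rw [toFormula_top]
          simp [mdepth]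
        · intro _
          omega
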